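/- arXiv:1803.06262 — 3 statements merged into one kernel-verified Lean document; each statement's English description precedes it below -/
import Mathlib

section
/- Let C ≥ 2 be an integer, let β : Fin C → ℝ be positive with a distinguished index l, let d be a natural number, and let ρ : Fin C → ℝ and ρmin, ρmax be reals with 0 < ρmin ≤ ρ c ≤ ρmax for every c. Let T, N, τ be reals with 0 < τ < N < T, and set S = (β l)² / (∑_{c ≠ l} (β c)²). If (ρmin² / ρmax²)^d ≥ ((1 + S)^((T − N)/(T − τ)) − 1) / S, then (1 − τ/T) · log(1 + (β l)² (ρ l)^(2d) / (∑_{c ≠ l} (ρ c)^(2d) (β c)²)) ≥ (1 − N/T) · log(1 + S). -/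
open Finset Real

theorem asymptotic_SE_improvement
    (C : ℕ) (hC : 2 ≤ C) (β : Fin C → ℝ) (hβ : ∀ c, 0 < β c)
    (l : Fin C) (d : ℕ) (ρ : Fin C → ℝ) (ρmin ρmax : ℝ)
    (hρmin : 0 < ρmin) (hρ : ∀ c, ρmin ≤ ρ c ∧ ρ c ≤ ρmax)
    (T N τ : ℝ) (hτ : 0 < τ) (hτN : τ < N) (hNT : N < T)
    (S : ℝ) (hS : S = (β l) ^ 2 / ∑ c ∈ Finset.univ.erase l, (β c) ^ 2)
    (hcond : (ρmin ^ 2 / ρmax ^ 2) ^ d ≥ ((1 + S) ^ ((T - N) / (T - τ)) - 1) / S) :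
    (1 - τ / T) * Real.log (1 + (β l) ^ 2 * (ρ l) ^ (2 * d) /
        ∑ c ∈ Finset.univ.erase l, (ρ c) ^ (2 * d) * (β c) ^ 2) ≥
      (1 - N / T) * Real.log (1 + S) := by
  have hT : (0:ℝ) < T := lt_trans (lt_trans hτ hτN) hNT
  have hTτ : (0:ℝ) < T - τ := by linarith
  set α : ℝ := (T - N) / (T - τ) with hα
  have hρmaxpos : 0 < ρmax := lt_of_lt_of_le hρmin ((hρ l).1.trans (hρ l).2)
  -- erase l is nonempty
  have hne : (Finset.univ.erase l).Nonempty := by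
    have : 1 ≤ (Finset.univ.erase l).card := by
      rw [Finset.card_erase_of_mem (Finset.mem_univ l), Finset.card_univ, Fintype.card_fin]
      omega
    exact Finset.card_pos.mp (by omega)
  set D : ℝ := ∑ c ∈ Finset.univ.erase l, (β c) ^ 2 with hD
  set E : ℝ := ∑ c ∈ Finset.univ.erase l, (ρ c) ^ (2 * d) * (β c) ^ 2 with hE
  have hDpos : 0 < D :=
    Finset.sum_pos (fun c _ => pow_pos (hβ c) 2) hne
  have hEpos : 0 < E :=
    Finset.sum_pos (fun c _ => mul_pos (pow_pos (lt_of_lt_of_le hρmin (hρ c).1) _)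
      (pow_pos (hβ c) 2)) hne
  have hSpos : 0 < S := by
    rw [hS]; exact div_pos (pow_pos (hβ l) 2) hDpos
  have hEle : E ≤ ρmax ^ (2 * d) * D := by
    rw [hD, Finset.mul_sum]
    refine Finset.sum_le_sum fun c _ => ?_
    gcongr
    · exact le_of_lt (lt_of_lt_of_le hρmin (hρ c).1)
    · exact (hρ c).2
  -- lower bound on the new SINR
  have hSINR : (ρmin ^ 2 / ρmax ^ 2) ^ d * S ≤ (β l) ^ 2 * (ρ l) ^ (2 * d) / E := by
    have h1 : (ρmin ^ 2 / ρmax ^ 2) ^ d * S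
        = (β l) ^ 2 * ρmin ^ (2 * d) / (ρmax ^ (2 * d) * D) := by
      rw [hS, div_pow, ← pow_mul, ← pow_mul]
      field_simp
    rw [h1]
    have hρl : 0 < ρ l := lt_of_lt_of_le hρmin (hρ l).1
    apply div_le_div₀
    · positivity
    · gcongr
      exact (hρ l).1
    · exact hEpos
    · exact hEle
  have hcond' : (1 + S) ^ α - 1 ≤ (ρmin ^ 2 / ρmax ^ 2) ^ d * S := by
    rw [ge_iff_le, div_le_iff₀ hSpos] at hcond
    linarith
  have hpow_le : (1 + S) ^ α ≤ 1 + (β l) ^ 2 * (ρ l) ^ (2 * d) / E := by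
    linarith
  have h1S : (0:ℝ) < 1 + S := by linarith
  have hrpow_pos : (0:ℝ) < (1 + S) ^ α := Real.rpow_pos_of_pos h1S α
  have hlog : α * Real.log (1 + S) ≤
      Real.log (1 + (β l) ^ 2 * (ρ l) ^ (2 * d) / E) := by
    rw [← Real.log_rpow h1S]
    exact Real.log_le_log hrpow_pos hpow_le
  have hfac : (0:ℝ) < 1 - τ / T := by
    rw [sub_pos, div_lt_one hT]; linarith
  have hlogS : 0 ≤ Real.log (1 + S) := Real.log_nonneg (by linarith)
  have hkey : (1 - N / T) * Real.log (1 + S) = (1 - τ / T) * (α * Real.log (1 + S)) := by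
    rw [hα]
    field_simp
  rw [ge_iff_le, hkey]
  exact mul_le_mul_of_nonneg_left hlog (le_of_lt hfac)
end

section
/- Let c > 0 and r > 0 be real numbers. Then the function x ↦ log(1 + c · r^(x−1)) − log(1 + c · r^x) (with r^x the real power) is antitone (non-increasing) on ℝ. -/
open Real

theorem antitone_one_step_gain (c r : ℝ) (hc : 0 < c) (hr : 0 < r) :
    Antitone (fun x : ℝ => Real.log (1 + c * r ^ (x - 1)) - Real.log (1 + c * r ^ x)) := by
  intro x y hxy
  simp only
  have hA : 0 < c * r ^ (x - 1) := by positivity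
  have hB : 0 < c * r ^ x := by positivity
  have hA' : 0 < c * r ^ (y - 1) := by positivity
  have hB' : 0 < c * r ^ y := by positivity
  rw [sub_le_sub_iff, ← Real.log_mul (by linarith) (by linarith),
    ← Real.log_mul (by linarith) (by linarith)]
  apply Real.log_le_log (by positivity)
  have hx : r ^ x = r ^ (x - 1) * r := by
    rw [← Real.rpow_add_one hr.ne' (x - 1)]; ring_nf
  have hy : r ^ y = r ^ (y - 1) * r := by
    rw [← Real.rpow_add_one hr.ne' (y - 1)]; ring_nf
  rcases le_total r 1 with h1 | h1
  · have hm : r ^ (y - 1) ≤ r ^ (x - 1) :=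
      Real.rpow_le_rpow_of_exponent_ge hr h1 (by linarith)
    have key : 0 ≤ (c * r ^ (x - 1) - c * r ^ (y - 1)) * (1 - r) :=
      mul_nonneg (by nlinarith) (by linarith)
    rw [hx, hy]; nlinarith [key]
  · have hm : r ^ (x - 1) ≤ r ^ (y - 1) :=
      Real.rpow_le_rpow_of_exponent_le h1 (by linarith)
    have key : 0 ≤ (c * r ^ (y - 1) - c * r ^ (x - 1)) * (r - 1) :=
      mul_nonneg (by nlinarith) (by linarith)
    rw [hx, hy]; nlinarith [key]
end

section
/- Let H be a natural number, let L : ℕ → ℝ be antitone (non-increasing), and for each finite set A ⊆ {1, …, H} define the delay d_A(t) = t − max({0} ∪ {s ∈ A : s ≤ t}) and the total reward F(A) = ∑_{t=1}^{H} L(d_A(t)). Then F is submodular: for all A ⊆ B ⊆ {1, …, H} and every v ∈ {1, …, H} with v ∉ B, F(A ∪ {v}) − F(A) ≥ F(B ∪ {v}) − F(B). -/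
open Finset

/-- CSI delay at slot `t` given training slots `A` (training at slot `0` implied):
`t` minus the last training slot `≤ t`. -/
def csiDelay (A : Finset ℕ) (t : ℕ) : ℕ :=
  t - (insert 0 (A.filter (fun s => s ≤ t))).max' (Finset.insert_nonempty _ _)

/-- Cumulative reward of the training-slot set `A` over the horizon `H`. -/
noncomputable def cumReward (H : ℕ) (L : ℕ → ℝ) (A : Finset ℕ) : ℝ :=
  ∑ t ∈ Finset.Icc 1 H, L (csiDelay A t)

/-- last training slot -/
def lastTr (A : Finset ℕ) (t : ℕ) : ℕ :=
  (insert 0 (A.filter (fun s => s ≤ t))).max' (Finset.insert_nonempty _ _)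

lemma csiDelay_eq (A : Finset ℕ) (t : ℕ) : csiDelay A t = t - lastTr A t := rfl

lemma lastTr_le (A : Finset ℕ) (t : ℕ) : lastTr A t ≤ t := by
  apply Finset.max'_le
  intro y hy
  rcases Finset.mem_insert.mp hy with h | h
  · omega
  · exact (Finset.mem_filter.mp h).2

lemma lastTr_mono {A B : Finset ℕ} (hAB : A ⊆ B) (t : ℕ) : lastTr A t ≤ lastTr B t := by
  apply Finset.max'_le
  intro y hy
  apply Finset.le_max'
  rcases Finset.mem_insert.mp hy with h | h
  · exact Finset.mem_insert.mpr (Or.inl h)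
  · exact Finset.mem_insert.mpr (Or.inr (Finset.filter_subset_filter _ hAB h))

lemma lastTr_insert_of_gt {v t : ℕ} (h : t < v) (A : Finset ℕ) :
    lastTr (insert v A) t = lastTr A t := by
  unfold lastTr
  congr 1
  rw [Finset.filter_insert, if_neg (by omega)]

lemma lastTr_insert_of_le {v t : ℕ} (h : v ≤ t) (A : Finset ℕ) :
    lastTr (insert v A) t = max v (lastTr A t) := by
  have hset : insert 0 ((insert v A).filter (fun s => s ≤ t)) =
      insert v (insert 0 (A.filter (fun s => s ≤ t))) := by
    rw [Finset.filter_insert, if_pos h, Finset.insert_comm]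
  unfold lastTr
  simp only [hset, Finset.max'_insert _ _ (Finset.insert_nonempty _ _)]

theorem cumReward_submodular (H : ℕ) (L : ℕ → ℝ) (hL : Antitone L)
    (A B : Finset ℕ) (hAB : A ⊆ B) (hB : B ⊆ Finset.Icc 1 H)
    (v : ℕ) (hv : v ∈ Finset.Icc 1 H) (hvB : v ∉ B) :
    cumReward H L (insert v A) - cumReward H L A ≥
      cumReward H L (insert v B) - cumReward H L B := by
  unfold cumReward
  rw [← Finset.sum_sub_distrib, ← Finset.sum_sub_distrib]
  apply Finset.sum_le_sum
  intro t _
  rw [csiDelay_eq, csiDelay_eq, csiDelay_eq, csiDelay_eq]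
  rcases lt_or_ge t v with h | h
  · rw [lastTr_insert_of_gt h, lastTr_insert_of_gt h]
    simp
  · rw [lastTr_insert_of_le h, lastTr_insert_of_le h]
    have hmono := lastTr_mono hAB t
    have hAt := lastTr_le A t
    have hBt := lastTr_le B t
    rcases le_or_gt v (lastTr B t) with hc | hc
    · rw [max_eq_right hc]
      have : L (t - lastTr A t) ≤ L (t - max v (lastTr A t)) :=
        hL (Nat.sub_le_sub_left (le_max_right _ _) t)
      linarith
    · rw [max_eq_left hc.le, max_eq_left (by omega)]
      have : L (t - lastTr A t) ≤ L (t - lastTr B t) := by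
        apply hL; omega
      linarith
end
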